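/- In the group 𝒢(Υ) associated to a group presentation 𝒫 = (X, 𝐫), every element of the subgroup 𝔘̂ is central. -/

import Mathlib

universe u

namespace Wh

variable {X : Type u}

/-- The set of symbols `(ᵘr)^ε` for a presentation with relators `rels`:
`u` is a word of the free group, `r` a relator and `eps` the sign (`true` for `+1`). -/
structure Sym (X : Type u) (rels : Set (FreeGroup X)) where
  u : FreeGroup X
  r : rels
  eps : Bool

variable {rels : Set (FreeGroup X)}

/-- The formal inverse `(ᵘr)^{-ε}` of a symbol `(ᵘr)^ε`. -/
def Sym.symInv (a : Sym X rels) : Sym X rels := ⟨a.u, a.r, !a.eps⟩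

/-- `θ((ᵘr)^ε) = u r^ε u⁻¹`. -/
def Sym.theta (a : Sym X rels) : FreeGroup X :=
  a.u * (if a.eps then (a.r : FreeGroup X) else (a.r : FreeGroup X)⁻¹) * a.u⁻¹

/-- The conjugate `ᵛ((ᵘr)^ε) = (^{vu}r)^ε`. -/
def Sym.conj (v : FreeGroup X) (a : Sym X rels) : Sym X rels := ⟨v * a.u, a.r, a.eps⟩

/-- The defining relations of the monoid `Υ` : `a ⬝ b = (^{θ(a)}b) ⬝ a`. -/
def upsRel (rels : Set (FreeGroup X)) :
    FreeMonoid (Sym X rels) → FreeMonoid (Sym X rels) → Prop := fun x y =>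
  ∃ a b : Sym X rels, x = FreeMonoid.of a * FreeMonoid.of b ∧
    y = FreeMonoid.of (Sym.conj (Sym.theta a) b) * FreeMonoid.of a

/-- The congruence on the free monoid on `Z` generated by the defining relations of `Υ`. -/
def upsCon (rels : Set (FreeGroup X)) : Con (FreeMonoid (Sym X rels)) := conGen (upsRel rels)

/-- The monoid `Υ` presented on `Z` by the relations `a ⬝ b = (^{θ(a)}b) ⬝ a`. -/
abbrev Ups (rels : Set (FreeGroup X)) := (upsCon rels).Quotient

/-- The canonical epimorphism `σ : FM(Z) → Υ`. -/
def sigma (rels : Set (FreeGroup X)) : FreeMonoid (Sym X rels) →* Ups rels := (upsCon rels).mk'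

/-- The submonoid `𝔘` of `Υ` generated by the elements `σ(a)σ(a⁻¹)`, `a ∈ Z`. -/
def UU (rels : Set (FreeGroup X)) : Submonoid (Ups rels) :=
  Submonoid.closure
    {x | ∃ a : Sym X rels, x = sigma rels (FreeMonoid.of a * FreeMonoid.of a.symInv)}

/-- The monoid homomorphism `θ̄ : Υ → F` induced by `θ`. -/
def thetaBar (rels : Set (FreeGroup X)) : Ups rels →* FreeGroup X :=
  (upsCon rels).lift (FreeMonoid.lift Sym.theta) (by
    apply Con.conGen_le.2
    rintro x y ⟨a, b, rfl, rfl⟩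
    simp only [Con.ker_rel, map_mul, FreeMonoid.lift_eval_of]
    simp only [Sym.theta, Sym.conj]
    group)

/-- The relators of the group `𝒢(Υ)` : `a ⬝ b ⬝ ι((^{θ(a)}b) ⬝ a)`. -/
def grels (rels : Set (FreeGroup X)) : Set (FreeGroup (Sym X rels)) :=
  {x | ∃ a b : Sym X rels, x = FreeGroup.of a * FreeGroup.of b *
      (FreeGroup.of (Sym.conj (Sym.theta a) b) * FreeGroup.of a)⁻¹}

/-- The universal enveloping group `𝒢(Υ)`. -/
abbrev GUps (rels : Set (FreeGroup X)) := PresentedGroup (grels rels)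

/-- The canonical monoid homomorphism `μ : Υ → 𝒢(Υ)`. -/
def mu (rels : Set (FreeGroup X)) : Ups rels →* GUps rels :=
  (upsCon rels).lift (FreeMonoid.lift fun a => (PresentedGroup.of a : GUps rels)) (by
    apply Con.conGen_le.2
    rintro x y ⟨a, b, rfl, rfl⟩
    simp only [Con.ker_rel, map_mul, FreeMonoid.lift_eval_of]
    have h2 : (QuotientGroup.mk (FreeGroup.of a * FreeGroup.of b *
        (FreeGroup.of (Sym.conj (Sym.theta a) b) * FreeGroup.of a)⁻¹) : GUps rels) = 1 :=
      (QuotientGroup.eq_one_iff _).2 (Subgroup.subset_normalClosure ⟨a, b, rfl⟩)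
    rw [QuotientGroup.mk_mul, QuotientGroup.mk_inv, QuotientGroup.mk_mul,
      QuotientGroup.mk_mul, mul_inv_eq_one] at h2
    exact h2)

/-- The subgroup `𝔘̂` of `𝒢(Υ)` generated by `μ(𝔘)`. -/
def UUhat (rels : Set (FreeGroup X)) : Subgroup (GUps rels) :=
  Subgroup.closure (mu rels '' (UU rels : Set (Ups rels)))

/-- The group homomorphism `θ̃ : 𝒢(Υ) → F` induced by `θ`. -/
def thetaTilde (rels : Set (FreeGroup X)) : GUps rels →* FreeGroup X :=
  PresentedGroup.toGroup (f := Sym.theta) (by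
    rintro x ⟨a, b, rfl⟩
    simp only [map_mul, map_inv, FreeGroup.lift_apply_of]
    simp only [Sym.theta, Sym.conj]
    group)

/-- Peiffer equivalence `~_𝔘` on `Υ` : the equivalence relation generated by the pairs
`(x, x ⬝ σ(a)σ(a⁻¹))`. -/
def peifferEquiv (rels : Set (FreeGroup X)) : Ups rels → Ups rels → Prop :=
  Relation.EqvGen fun x y => ∃ a : Sym X rels,
    y = x * sigma rels (FreeMonoid.of a * FreeMonoid.of a.symInv)

/-- The weak dominion of a submonoid `U` of a monoid `S`. -/
def WDom (S : Type u) [Monoid S] (U : Submonoid S) : Set S :=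
  {d | ∀ (G : Type u) [Group G] (f g : S →* G), (∀ u ∈ U, f u = g u) → f d = g d}

/-- The `F`-action on `𝒢(Υ)` determined by `ʷ(μσ(a)) = μσ(ʷa)`. -/
def actF (rels : Set (FreeGroup X)) (w : FreeGroup X) : GUps rels →* GUps rels :=
  PresentedGroup.toGroup (f := fun a => (PresentedGroup.of (Sym.conj w a) : GUps rels)) (by
    rintro x ⟨a, b, rfl⟩
    simp only [map_mul, map_inv, FreeGroup.lift_apply_of]
    have key : Sym.conj w (Sym.conj (Sym.theta a) b) =
        Sym.conj (Sym.theta (Sym.conj w a)) (Sym.conj w b) := by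
      simp [Sym.conj, Sym.theta, mul_assoc]
      split_ifs <;> simp_all
    rw [key]
    have h2 : (QuotientGroup.mk (FreeGroup.of (Sym.conj w a) * FreeGroup.of (Sym.conj w b) *
        (FreeGroup.of (Sym.conj (Sym.theta (Sym.conj w a)) (Sym.conj w b)) *
          FreeGroup.of (Sym.conj w a))⁻¹) : GUps rels) = 1 :=
      (QuotientGroup.eq_one_iff _).2 (Subgroup.subset_normalClosure ⟨_, _, rfl⟩)
    rw [QuotientGroup.mk_mul, QuotientGroup.mk_inv, QuotientGroup.mk_mul,
      QuotientGroup.mk_mul] at h2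
    exact h2)

theorem _root_.Subgroup.mem_center_of_commute_of_closure_eq_top {G : Type*} [Group G]
    {s : Set G} (hs : Subgroup.closure s = ⊤) {z : G} (hz : ∀ g ∈ s, Commute g z) :
    z ∈ Subgroup.center G := by
  rw [Subgroup.center_eq_iInf hs]
  simpa only [Subgroup.mem_iInf, Subgroup.mem_centralizer_singleton_iff] using
    fun g hg => (hz g hg).eq.symm

variable {rels : Set (FreeGroup X)}

theorem Sym.theta_symInv (a : Sym X rels) : a.symInv.theta = a.theta⁻¹ := by
  rcases a with ⟨u, r, _ | _⟩ <;> simp [Sym.theta, Sym.symInv, mul_assoc]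

theorem Sym.conj_conj_inv (w : FreeGroup X) (b : Sym X rels) : (b.conj w⁻¹).conj w = b := by
  simp [Sym.conj]

theorem of_mul_of (a b : Sym X rels) :
    (PresentedGroup.of a : GUps rels) * PresentedGroup.of b =
      PresentedGroup.of (b.conj a.theta) * PresentedGroup.of a :=
  PresentedGroup.mk_eq_mk_of_mul_inv_mem (rels := grels rels) ⟨a, b, rfl⟩

-- Moving `b` across `a⁻¹` and then across `a` conjugates it by `θ(a)⁻¹` and back by `θ(a)`.
theorem commute_of_of_mul_of_symInv (a b : Sym X rels) :
    Commute (PresentedGroup.of b : GUps rels)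
      (PresentedGroup.of a * PresentedGroup.of a.symInv) := by
  symm
  calc (PresentedGroup.of a : GUps rels) * PresentedGroup.of a.symInv * PresentedGroup.of b
      = PresentedGroup.of a * PresentedGroup.of (b.conj a.theta⁻¹) *
          PresentedGroup.of a.symInv := by
        rw [mul_assoc, of_mul_of a.symInv b, Sym.theta_symInv, mul_assoc]
    _ = PresentedGroup.of b * (PresentedGroup.of a * PresentedGroup.of a.symInv) := by
        rw [of_mul_of a, Sym.conj_conj_inv, mul_assoc]

theorem of_mul_of_symInv_mem_center (a : Sym X rels) :
    (PresentedGroup.of a * PresentedGroup.of a.symInv : GUps rels) ∈ Subgroup.center _ :=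
  Subgroup.mem_center_of_commute_of_closure_eq_top (PresentedGroup.closure_range_of _)
    (by rintro _ ⟨b, rfl⟩; exact commute_of_of_mul_of_symInv a b)

theorem mu_sigma_of_mul_of (a b : Sym X rels) :
    mu rels (sigma rels (FreeMonoid.of a * FreeMonoid.of b)) =
      PresentedGroup.of a * PresentedGroup.of b :=
  rfl

theorem map_UU_le_center :
    (UU rels).map (mu rels) ≤ (Subgroup.center (GUps rels)).toSubmonoid := by
  rw [Submonoid.map_le_iff_le_comap, UU, Submonoid.closure_le]
  rintro _ ⟨a, rfl⟩
  rw [SetLike.mem_coe, Submonoid.mem_comap, mu_sigma_of_mul_of]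
  exact of_mul_of_symInv_mem_center a

theorem UUhat_le_center : UUhat rels ≤ Subgroup.center (GUps rels) :=
  Subgroup.closure_le _ |>.2 map_UU_le_center

/-- Lemma 1 (second part) of the paper: the elements of `𝔘̂` are central in `𝒢(Υ)`. -/
theorem UUhat_central (rels : Set (FreeGroup X)) :
    ∀ u ∈ UUhat rels, ∀ x : GUps rels, u * x = x * u :=
  fun _ hu x => (Subgroup.mem_center_iff.1 (UUhat_le_center hu) x).symm

end Wh
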